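/- Let X be a cyclic set of M⁺ with e ∈ X, and let 𝒴 be a nonempty collection of cyclic flats of M⁺, each properly contained in X, such that e lies in some circuit of M⁺ contained in ⋂_{Y ∈ 𝒴} Y (that is, e belongs to the lattice meet ∧𝒴 of the members of 𝒴). Then −Δγ(X) = Σ Δγ(Z), where the sum ranges over all cyclic flats Z of M⁺ such that Z ⊊ X and Z is not contained in any member of 𝒴. -/

import Mathlib

open Set Matroid
open scoped Classical

namespace Paper

variable {α : Type*}

/-- A circuit of a matroid: a minimal dependent set. -/
def Circuit (M : Matroid α) (C : Set α) : Prop :=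
  M.Dep C ∧ ∀ D ⊂ C, M.Indep D

/-- A coloop: an element of the ground set lying in no circuit. -/
def Coloop (M : Matroid α) (x : α) : Prop :=
  x ∈ M.E ∧ ∀ C, Circuit M C → x ∉ C

/-- The set of coloops of a matroid. -/
def coloops (M : Matroid α) : Set α := {x | Coloop M x}

/-- A cyclic set: a subset of the ground set each of whose elements lies in a
circuit contained in the set (equivalently, the restriction has no coloops). -/
def Cyclic (M : Matroid α) (X : Set α) : Prop :=
  X ⊆ M.E ∧ ∀ x ∈ X, ∃ C, Circuit M C ∧ C ⊆ X ∧ x ∈ C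

/-- A cyclic flat: a cyclic set that is also a flat. -/
def CyclicFlat (M : Matroid α) (X : Set α) : Prop :=
  Cyclic M X ∧ M.IsFlat X

/-- The rank of a set: the largest cardinality of an independent subset. -/
noncomputable def rk (M : Matroid α) (X : Set α) : ℕ :=
  sSup (Set.ncard '' {I | M.Indep I ∧ I ⊆ X})

/-- The nullity of a set: `n(X) = |X| − r(X)`. -/
noncomputable def nullity (M : Matroid α) (X : Set α) : ℤ :=
  (X.ncard : ℤ) - rk M X

/-- Deletion of a single element: `M \ e`. -/
noncomputable def deleteElem (M : Matroid α) (e : α) : Matroid α :=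
  M ↾ (M.E \ {e})

variable [Fintype α] [DecidableEq α]

/-- The `γ` function: `γ_M(X) = n(X) − Σ_{Z ∈ Z(M), Z ⊊ X} γ_M(Z)`. -/
noncomputable def gamma (M : Matroid α) (X : Finset α) : ℤ :=
  nullity M ↑X -
    ∑ Z ∈ (Finset.univ.filter (fun Z : Finset α => CyclicFlat M ↑Z ∧ Z ⊂ X)).attach,
      gamma M Z.1
termination_by X.card
decreasing_by
  exact Finset.card_lt_card (Finset.mem_filter.mp Z.2).2.2

/-- `Δγ(X) = γ_M(X − e) − γ_{M⁺}(X)` where `M = M⁺ \ e`. -/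
noncomputable def dgamma (M : Matroid α) (e : α) (X : Finset α) : ℤ :=
  gamma (deleteElem M e) (X.erase e) - gamma M X

end Paper

/-!
Comparing the defining recursions of `γ_{M⁺}` at `X` and of `γ_M` at `X − e` gives
`Δγ(X) + Σ_{Z ∈ Z(M⁺), Z ⊊ X} Δγ(Z) = -1` whenever `e ∈ X ∩ cl(X − e)`: deleting `e` lowers the
nullity of `X` by one, and `Z ↦ Z − e` is a bijection from the cyclic flats `Z ⊊ X` of `M⁺` with
`Z − e` cyclic onto the cyclic flats of `M` properly contained in `X − e`, while for the other `Z`,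
`Z − e` is a non-cyclic flat of `M`, on which `γ_M` vanishes.

Applied to the cyclic part of a flat `F` of `M⁺` containing a circuit through `e`, this says that
`Δγ` sums to `-1` over the cyclic flats inside `F`. Such flats are closed under intersection, so by
inclusion–exclusion the cyclic flats contained in some member of `𝒴` also contribute `-1` in total,
and the remaining cyclic flats properly contained in `X` must contribute `-Δγ(X)`.
-/

namespace Paper

section FinsetSums

lemma sum_filter_subset_eq_add_sum_filter_ssubset {β G : Type*} [DecidableEq β] [AddCommMonoid G]
    {s : Finset (Finset β)} {V : Finset β} (hV : V ∈ s) (f : Finset β → G) :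
    ∑ Z ∈ s with Z ⊆ V, f Z = f V + ∑ Z ∈ s with Z ⊂ V, f Z := by
  have hs : {Z ∈ s | Z ⊆ V} = insert V {Z ∈ s | Z ⊂ V} := by
    ext Z
    simp only [Finset.mem_insert, Finset.mem_filter, Finset.ssubset_iff_subset_ne]
    grind
  rw [hs, Finset.sum_insert (by simp)]

lemma sum_filter_exists_le_eq {β G : Type*} [SemilatticeInf β] [DecidableEq β] [DecidableLE β]
    [AddCommGroup G] {p : β → Prop} (hp : ∀ V W, p V → p W → p (V ⊓ W)) (s : Finset β)
    (f : β → G) (c : G) (hc : ∀ V, p V → ∑ z ∈ s with z ≤ V, f z = c) (Y : Finset β)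
    (hY : Y.Nonempty) (hYp : ∀ W ∈ Y, p W) :
    ∑ z ∈ s with ∃ W ∈ Y, z ≤ W, f z = c := by
  induction hn : Y.card using Nat.strong_induction_on generalizing Y with
  | _ n ih =>
  obtain ⟨W, hW⟩ := hY
  set Y' := Y.erase W
  have hYW : insert W Y' = Y := Finset.insert_erase hW
  obtain hY' | hY' := Y'.eq_empty_or_nonempty
  · rw [← hYW, hY']
    simpa using hc W (hYp W hW)
  have hY'p : ∀ U ∈ Y', p U := fun U hU => hYp U (Finset.mem_of_mem_erase hU)
  have hcard : Y'.card < n := hn ▸ Finset.card_erase_lt_of_mem hW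
  have hunion : {z ∈ s | ∃ U ∈ Y, z ≤ U} = {z ∈ s | z ≤ W} ∪ {z ∈ s | ∃ U ∈ Y', z ≤ U} := by
    rw [← Finset.filter_or, ← hYW]
    simp
  have hinter : {z ∈ s | z ≤ W} ∩ {z ∈ s | ∃ U ∈ Y', z ≤ U} =
      {z ∈ s | ∃ U ∈ Y'.image (W ⊓ ·), z ≤ U} := by
    rw [← Finset.filter_and]
    refine Finset.filter_congr fun z _ => ?_
    simp only [Finset.mem_image, exists_exists_and_eq_and, le_inf_iff]
    exact ⟨fun ⟨h, U, hU, hzU⟩ => ⟨U, hU, h, hzU⟩, fun ⟨U, hU, h, hzU⟩ => ⟨h, U, hU, hzU⟩⟩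
  have hmeets : ∀ U ∈ Y'.image (W ⊓ ·), p U := by
    simpa using fun U hU => hp _ _ (hYp W hW) (hY'p U hU)
  have h := Finset.sum_union_inter (f := f) (s₁ := {z ∈ s | z ≤ W})
    (s₂ := {z ∈ s | ∃ U ∈ Y', z ≤ U})
  rw [← hunion, hinter, hc W (hYp W hW), ih _ hcard Y' hY' hY'p rfl,
    ih _ (Finset.card_image_le.trans_lt hcard) _ (hY'.image _) hmeets rfl] at h
  exact add_right_cancel h

end FinsetSums

section Matroid

variable {α : Type*} {M : Matroid α} {C R X F G : Set α} {x : α}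

lemma circuit_iff_isCircuit : Circuit M C ↔ M.IsCircuit C :=
  isCircuit_iff_forall_ssubset.symm

lemma cyclic_iff : Cyclic M X ↔ X ⊆ M.E ∧ ∀ x ∈ X, ∃ C ⊆ X, M.IsCircuit C ∧ x ∈ C := by
  simp only [Cyclic, circuit_iff_isCircuit]
  grind

lemma cyclic_restrict_iff (hR : R ⊆ M.E) (hXR : X ⊆ R) : Cyclic (M ↾ R) X ↔ Cyclic M X := by
  simp only [cyclic_iff, restrict_ground_eq, restrict_isCircuit_iff hR]
  exact ⟨fun h => ⟨hXR.trans hR, fun x hx => by grind⟩, fun h => ⟨hXR, fun x hx => by grind⟩⟩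

lemma Cyclic.insert_of_mem_closure (hX : Cyclic M X) (hx : x ∈ M.closure X) :
    Cyclic M (insert x X) := by
  by_cases hxX : x ∈ X
  · rwa [insert_eq_of_mem hxX]
  rw [cyclic_iff] at hX ⊢
  refine ⟨insert_subset (M.closure_subset_ground X hx) hX.1, ?_⟩
  rintro y (rfl | hy)
  · exact (mem_closure_iff_exists_isCircuit hxX).1 hx
  · obtain ⟨C, hCX, hC, hyC⟩ := hX.2 y hy
    exact ⟨C, hCX.trans (subset_insert _ _), hC, hyC⟩

lemma _root_.Matroid.IsFlat.inter (hF : M.IsFlat F) (hG : M.IsFlat G) : M.IsFlat (F ∩ G) := by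
  rw [inter_eq_iInter]
  exact IsFlat.iInter (by rintro (_ | _) <;> assumption)

lemma cast_rk_eq_eRk (hX : X.Finite) : (rk M X : ℕ∞) = M.eRk X := by
  obtain ⟨I, hI⟩ := M.exists_isBasis' X
  have hIfin : I.Finite := hX.subset hI.subset
  have hmem : I.ncard ∈ ncard '' {J | M.Indep J ∧ J ⊆ X} := ⟨I, ⟨hI.indep, hI.subset⟩, rfl⟩
  have hle : ∀ n ∈ ncard '' {J | M.Indep J ∧ J ⊆ X}, n ≤ I.ncard := by
    rintro _ ⟨J, ⟨hJ, hJX⟩, rfl⟩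
    have hJI := hJ.encard_le_eRk_of_subset hJX
    rw [← hI.encard_eq_eRk, ← (hX.subset hJX).cast_ncard_eq, ← hIfin.cast_ncard_eq] at hJI
    exact_mod_cast hJI
  have hrk : rk M X = I.ncard := (csSup_le ⟨_, hmem⟩ hle).antisymm (le_csSup ⟨_, hle⟩ hmem)
  rw [hrk, hIfin.cast_ncard_eq, hI.encard_eq_eRk]

lemma rk_restrict (hXR : X ⊆ R) : rk (M ↾ R) X = rk M X := by
  have hind : {I | (M ↾ R).Indep I ∧ I ⊆ X} = {I | M.Indep I ∧ I ⊆ X} := by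
    ext I
    simp only [restrict_indep_iff]
    exact ⟨fun h => ⟨h.1.1, h.2⟩, fun h => ⟨⟨h.1, h.2.trans hXR⟩, h.2⟩⟩
  rw [rk, rk, hind]

lemma rk_insert_of_mem_closure (hX : X.Finite) (hx : x ∈ M.closure X) :
    rk M (insert x X) = rk M X := by
  have h : (rk M (insert x X) : ℕ∞) = rk M X := by
    rw [cast_rk_eq_eRk (hX.insert x), cast_rk_eq_eRk hX, ← eRk_closure_eq,
      closure_insert_eq_of_mem_closure hx, eRk_closure_eq]
  exact_mod_cast h

lemma rk_insert_of_notMem_closure (hX : X.Finite) (hx : x ∈ M.E \ M.closure X) :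
    rk M (insert x X) = rk M X + 1 := by
  have h : (rk M (insert x X) : ℕ∞) = rk M X + 1 := by
    rw [cast_rk_eq_eRk (hX.insert x), cast_rk_eq_eRk hX, eRk_insert_eq_add_one hx]
  exact_mod_cast h

lemma nullity_restrict (hXR : X ⊆ R) : nullity (M ↾ R) X = nullity M X := by
  rw [nullity, nullity, rk_restrict hXR]

lemma nullity_insert_of_mem_closure (hX : X.Finite) (hxX : x ∉ X) (hx : x ∈ M.closure X) :
    nullity M (insert x X) = nullity M X + 1 := by
  rw [nullity, nullity, rk_insert_of_mem_closure hX hx, ncard_insert_of_notMem hxX hX]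
  push_cast
  ring

lemma nullity_insert_of_notMem_closure (hX : X.Finite) (hx : x ∈ M.E \ M.closure X) :
    nullity M (insert x X) = nullity M X := by
  have hxX : x ∉ X := fun h => hx.2 (M.mem_closure_of_mem' h hx.1)
  rw [nullity, nullity, rk_insert_of_notMem_closure hX hx, ncard_insert_of_notMem hxX hX]
  push_cast
  ring

end Matroid

section CyclicPart

variable {α : Type*} {M : Matroid α} {C : Set α} {F Z : Finset α}

noncomputable def cyc (M : Matroid α) (F : Finset α) : Finset α :=
  {x ∈ F | ∃ C ⊆ (F : Set α), M.IsCircuit C ∧ x ∈ C}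

lemma cyc_subset : cyc M F ⊆ F := Finset.filter_subset _ _

lemma _root_.Matroid.IsCircuit.subset_cyc (hC : M.IsCircuit C) (hCF : C ⊆ F) :
    C ⊆ cyc M F :=
  fun _ hx => Finset.mem_filter.2 ⟨hCF hx, C, hCF, hC, hx⟩

lemma cyclic_cyc : Cyclic M (cyc M F) := by
  refine cyclic_iff.2 ⟨fun _ hx => ?_, fun x hx => ?_⟩ <;>
  obtain ⟨-, C, hCF, hC, hxC⟩ := Finset.mem_filter.1 hx
  · exact hC.subset_ground hxC
  · exact ⟨C, hC.subset_cyc hCF, hC, hxC⟩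

lemma Cyclic.subset_cyc_iff (hZ : Cyclic M Z) : Z ⊆ cyc M F ↔ Z ⊆ F := by
  refine ⟨fun h => h.trans cyc_subset, fun h x hx => ?_⟩
  obtain ⟨C, hCZ, hC, hxC⟩ := (cyclic_iff.1 hZ).2 x hx
  exact hC.subset_cyc (hCZ.trans (Finset.coe_subset.2 h)) hxC

lemma notMem_closure_of_notMem_cyc {G : Set α} {x : α} (hGF : G ⊆ F) (hxF : x ∈ F)
    (hx : x ∉ cyc M F) (hxG : x ∉ G) : x ∉ M.closure G := by
  intro hcl
  obtain ⟨C, hCG, hC, hxC⟩ := exists_isCircuit_of_mem_closure hcl hxG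
  exact hx (hC.subset_cyc (hCG.trans (insert_subset hxF hGF)) hxC)

lemma _root_.Matroid.IsFlat.cyc (hF : M.IsFlat F) : M.IsFlat (cyc M F) := by
  refine isFlat_iff_closure_eq.2 (Subset.antisymm (fun y hy => by_contra fun hy' => ?_)
    (M.subset_closure _ cyclic_cyc.1))
  have hcF := Finset.coe_subset.2 (cyc_subset (M := M) (F := F))
  have hyF : y ∈ (F : Set α) := hF.closure ▸ M.closure_subset_closure hcF hy
  exact notMem_closure_of_notMem_cyc hcF hyF hy' hy' hy

lemma nullity_cyc [DecidableEq α] (hF : (F : Set α) ⊆ M.E) :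
    nullity M (cyc M F) = nullity M F := by
  suffices h : ∀ D ⊆ F \ cyc M F, nullity M ↑(cyc M F ∪ D) = nullity M (cyc M F) by
    rw [← h _ subset_rfl, Finset.union_sdiff_of_subset cyc_subset]
  intro D hD
  induction D using Finset.induction_on with
  | empty => rw [Finset.union_empty]
  | insert x D hxD ih =>
    obtain ⟨hxF, hxc⟩ := Finset.mem_sdiff.1 (hD (Finset.mem_insert_self x D))
    have hDF : cyc M F ∪ D ⊆ F := Finset.union_subset cyc_subset
      (((Finset.subset_insert x D).trans hD).trans Finset.sdiff_subset)
    have hxD' : x ∉ cyc M F ∪ D := by simp [hxc, hxD]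
    have hxcl : x ∉ M.closure ↑(cyc M F ∪ D) :=
      notMem_closure_of_notMem_cyc (Finset.coe_subset.2 hDF) hxF hxc (by exact_mod_cast hxD')
    rw [Finset.union_insert, Finset.coe_insert,
      nullity_insert_of_notMem_closure (Finset.finite_toSet _) ⟨hF hxF, hxcl⟩,
      ih ((Finset.subset_insert x D).trans hD)]

end CyclicPart

section Gamma

variable {α : Type*} [Fintype α]

noncomputable def cyclicFlats (M : Matroid α) : Finset (Finset α) :=
  {Z | CyclicFlat M Z}

lemma mem_cyclicFlats {M : Matroid α} {Z : Finset α} : Z ∈ cyclicFlats M ↔ CyclicFlat M Z := by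
  simp [cyclicFlats]

variable [DecidableEq α]

lemma gamma_add_sum_gamma (M : Matroid α) (X : Finset α) :
    gamma M X + ∑ Z ∈ cyclicFlats M with Z ⊂ X, gamma M Z = nullity M X := by
  rw [gamma, Finset.sum_attach, cyclicFlats, Finset.filter_filter]
  ring

lemma gamma_eq_zero_of_not_cyclic {M : Matroid α} {F : Finset α} (hF : M.IsFlat F)
    (hnc : ¬ Cyclic M F) : gamma M F = 0 := by
  have hW : cyc M F ∈ cyclicFlats M := mem_cyclicFlats.2 ⟨cyclic_cyc, hF.cyc⟩
  have hWF : cyc M F ⊂ F := cyc_subset.ssubset_of_ne fun h => hnc (h ▸ cyclic_cyc)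
  have hs : {Z ∈ cyclicFlats M | Z ⊂ F} = {Z ∈ cyclicFlats M | Z ⊆ cyc M F} := by
    ext Z
    simp only [Finset.mem_filter, and_congr_right_iff, mem_cyclicFlats]
    exact fun hZ => ⟨fun h => hZ.1.subset_cyc_iff.2 h.subset, fun h => h.trans_ssubset hWF⟩
  have hF' := gamma_add_sum_gamma M F
  have hW' := gamma_add_sum_gamma M (cyc M F)
  rw [hs, sum_filter_subset_eq_add_sum_filter_ssubset hW] at hF'
  linarith [nullity_cyc hF.subset_ground]

end Gamma

section Deletion

variable {α : Type*} [DecidableEq α] {M : Matroid α} {e : α} {X Z Z₁ Z₂ Z' : Finset α}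

lemma _root_.Matroid.IsFlat.deleteElem_erase (hZ : M.IsFlat Z) :
    (deleteElem M e).IsFlat ↑(Z.erase e) := by
  have hZe : (↑(Z.erase e) : Set α) ⊆ M.E \ {e} := by
    rw [Finset.coe_erase]
    exact sdiff_subset_sdiff_left hZ.subset_ground
  rw [isFlat_iff_closure_eq, deleteElem, restrict_closure_eq M hZe sdiff_subset]
  refine Subset.antisymm ?_ (subset_inter (M.subset_closure _ (hZe.trans sdiff_subset)) hZe)
  rintro y ⟨hy, -, hye⟩
  rw [Finset.coe_erase]
  exact ⟨hZ.closure ▸ M.closure_subset_closure (by simp) hy, hye⟩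

lemma CyclicFlat.mem_iff_mem_closure_erase (hZ : CyclicFlat M Z) :
    e ∈ Z ↔ e ∈ M.closure ↑(Z.erase e) := by
  refine ⟨fun he => ?_, fun he => ?_⟩
  · obtain ⟨C, hCZ, hC, heC⟩ := (cyclic_iff.1 hZ.1).2 e he
    refine M.closure_subset_closure ?_ (hC.mem_closure_sdiff_singleton_of_mem heC)
    rw [Finset.coe_erase]
    exact sdiff_subset_sdiff_left hCZ
  · have he' := M.closure_subset_closure (Finset.coe_subset.2 (Finset.erase_subset e Z)) he
    rwa [hZ.2.closure, Finset.mem_coe] at he'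

lemma CyclicFlat.eq_of_erase_eq (h₁ : CyclicFlat M Z₁) (h₂ : CyclicFlat M Z₂)
    (h : Z₁.erase e = Z₂.erase e) : Z₁ = Z₂ := by
  have he : e ∈ Z₁ ↔ e ∈ Z₂ := by
    rw [h₁.mem_iff_mem_closure_erase, h₂.mem_iff_mem_closure_erase, h]
  ext x
  obtain rfl | hx := eq_or_ne x e
  · exact he
  · simpa [hx] using congrArg (x ∈ ·) h

lemma CyclicFlat.exists_erase_eq (hZ' : CyclicFlat (deleteElem M e) Z') :
    ∃ Z : Finset α, CyclicFlat M Z ∧ Z.erase e = Z' ∧ Z ⊆ insert e Z' := by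
  have hZ'E : (Z' : Set α) ⊆ M.E \ {e} := hZ'.1.1
  have heZ' : e ∉ Z' := fun h => (hZ'E h).2 rfl
  have hcyc : Cyclic M Z' := (cyclic_restrict_iff sdiff_subset hZ'E).1 hZ'.1
  have hcl : M.closure Z' ⊆ insert e ↑Z' := by
    have hflat := hZ'.2.closure
    rw [deleteElem, restrict_closure_eq M hZ'E sdiff_subset] at hflat
    intro y hy
    obtain rfl | hye := eq_or_ne y e
    · exact mem_insert _ _
    · exact Or.inr (hflat ▸ ⟨hy, M.closure_subset_ground _ hy, hye⟩)
  by_cases he : e ∈ M.closure Z'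
  · refine ⟨insert e Z', ⟨?_, ?_⟩, Finset.erase_insert heZ', Finset.Subset.rfl⟩
    · rw [Finset.coe_insert]
      exact hcyc.insert_of_mem_closure he
    · rw [Finset.coe_insert, ← hcl.antisymm (insert_subset he (M.subset_closure _ hcyc.1))]
      exact isFlat_closure _
  · refine ⟨Z', ⟨hcyc, ?_⟩, Finset.erase_eq_of_notMem heZ', Finset.subset_insert _ _⟩
    refine isFlat_iff_closure_eq.2 (Subset.antisymm (fun y hy => ?_) (M.subset_closure _ hcyc.1))
    exact (hcl hy).resolve_left (by rintro rfl; exact he hy)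

variable [Fintype α]

lemma sum_gamma_deleteElem_erase (heX : e ∈ X) (hcl : e ∈ M.closure ↑(X.erase e)) :
    ∑ Z ∈ cyclicFlats M with Z ⊂ X, gamma (deleteElem M e) (Z.erase e) =
      ∑ Z' ∈ cyclicFlats (deleteElem M e) with Z' ⊂ X.erase e, gamma (deleteElem M e) Z' := by
  -- Only the nonzero terms must correspond: `γ_M` vanishes at the flat `Z − e` unless it is cyclic.
  refine Finset.sum_bij_ne_zero (fun Z _ _ => Z.erase e) ?_ ?_ ?_ fun _ _ _ => rfl
  · intro Z hZ hγ
    obtain ⟨hZ, hZX⟩ := Finset.mem_filter.1 hZ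
    rw [mem_cyclicFlats] at hZ
    have hcyc : Cyclic (deleteElem M e) ↑(Z.erase e) :=
      by_contra fun h => hγ (gamma_eq_zero_of_not_cyclic hZ.2.deleteElem_erase h)
    refine Finset.mem_filter.2 ⟨mem_cyclicFlats.2 ⟨hcyc, hZ.2.deleteElem_erase⟩,
      (Finset.erase_subset_erase e hZX.subset).ssubset_of_ne fun h => hZX.ne ?_⟩
    have heZ : e ∈ Z := hZ.mem_iff_mem_closure_erase.2 (h ▸ hcl)
    rw [← Finset.insert_erase heZ, h, Finset.insert_erase heX]
  · intro Z₁ h₁ _ Z₂ h₂ _ h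
    exact (mem_cyclicFlats.1 (Finset.mem_filter.1 h₁).1).eq_of_erase_eq
      (mem_cyclicFlats.1 (Finset.mem_filter.1 h₂).1) h
  · intro Z' hZ' hγ
    obtain ⟨hZ', hZ'X⟩ := Finset.mem_filter.1 hZ'
    obtain ⟨Z, hZ, rfl, hZsub⟩ := (mem_cyclicFlats.1 hZ').exists_erase_eq
    refine ⟨Z, Finset.mem_filter.2 ⟨mem_cyclicFlats.2 hZ, ?_⟩, hγ, rfl⟩
    refine (hZsub.trans (Finset.insert_subset heX ?_)).ssubset_of_ne ?_
    · exact hZ'X.subset.trans (Finset.erase_subset e X)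
    · rintro rfl
      exact hZ'X.ne rfl

lemma dgamma_add_sum_dgamma (hXE : ↑X ⊆ M.E) (heX : e ∈ X)
    (hcl : e ∈ M.closure ↑(X.erase e)) :
    dgamma M e X + ∑ Z ∈ cyclicFlats M with Z ⊂ X, dgamma M e Z = -1 := by
  have hnull : nullity (deleteElem M e) ↑(X.erase e) + 1 = nullity M X := by
    have hXe : (↑(X.erase e) : Set α) ⊆ M.E \ {e} := by
      rw [Finset.coe_erase]
      exact sdiff_subset_sdiff_left hXE
    rw [deleteElem, nullity_restrict hXe,
      ← nullity_insert_of_mem_closure (Finset.finite_toSet _) (by simp) hcl,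
      ← Finset.coe_insert, Finset.insert_erase heX]
  have hM := gamma_add_sum_gamma M X
  have hM' := gamma_add_sum_gamma (deleteElem M e) (X.erase e)
  rw [← sum_gamma_deleteElem_erase heX hcl] at hM'
  simp only [dgamma, Finset.sum_sub_distrib]
  linarith

lemma sum_dgamma_of_isFlat {V : Finset α} {C : Set α} (hV : M.IsFlat V) (hC : M.IsCircuit C)
    (hCV : C ⊆ V) (heC : e ∈ C) :
    ∑ Z ∈ cyclicFlats M with Z ⊆ V, dgamma M e Z = -1 := by
  have hW : cyc M V ∈ cyclicFlats M := mem_cyclicFlats.2 ⟨cyclic_cyc, hV.cyc⟩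
  have hCW : C ⊆ cyc M V := hC.subset_cyc hCV
  have hs : {Z ∈ cyclicFlats M | Z ⊆ V} = {Z ∈ cyclicFlats M | Z ⊆ cyc M V} :=
    Finset.filter_congr fun Z hZ => (mem_cyclicFlats.1 hZ).1.subset_cyc_iff.symm
  have hcl : e ∈ M.closure ↑((cyc M V).erase e) := by
    refine M.closure_subset_closure ?_ (hC.mem_closure_sdiff_singleton_of_mem heC)
    rw [Finset.coe_erase]
    exact sdiff_subset_sdiff_left hCW
  rw [hs, sum_filter_subset_eq_add_sum_filter_ssubset hW]
  exact dgamma_add_sum_dgamma cyclic_cyc.1 (hCW heC) hcl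

lemma sum_dgamma_of_forall_isFlat {C : Set α} {Y : Finset (Finset α)} (hC : M.IsCircuit C)
    (heC : e ∈ C) (hY : Y.Nonempty) (hYC : ∀ W ∈ Y, M.IsFlat ↑W ∧ C ⊆ ↑W) :
    ∑ Z ∈ cyclicFlats M with ∃ W ∈ Y, Z ⊆ W, dgamma M e Z = -1 := by
  refine sum_filter_exists_le_eq (p := fun V : Finset α => M.IsFlat ↑V ∧ C ⊆ ↑V)
    (fun V U hV hU => ?_) _ _ _ (fun V hV => sum_dgamma_of_isFlat hV.1 hC hV.2 heC) Y hY hYC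
  rw [Finset.inf_eq_inter, Finset.coe_inter]
  exact ⟨hV.1.inter hU.1, subset_inter hV.2 hU.2⟩

end Deletion

variable {α : Type*} [Fintype α] [DecidableEq α]

theorem statement_13_general (M : Matroid α) (e : α)
    (X : Finset α) (hcyc : Cyclic M ↑X) (heX : e ∈ X)
    (Y : Finset (Finset α)) (hYne : Y.Nonempty)
    (hY : ∀ Z ∈ Y, CyclicFlat M ↑Z ∧ Z ⊂ X)
    (hmeet : ∃ C : Set α, Circuit M C ∧ (∀ Z ∈ Y, C ⊆ ↑Z) ∧ e ∈ C) :
    -dgamma M e X =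
      ∑ Z ∈ Finset.univ.filter
          (fun Z : Finset α => CyclicFlat M ↑Z ∧ Z ⊂ X ∧ ∀ W ∈ Y, ¬ Z ⊆ W),
        dgamma M e Z := by
  obtain ⟨C, hC, hCY, heC⟩ := hmeet
  rw [circuit_iff_isCircuit] at hC
  obtain ⟨W, hW⟩ := hYne
  have hcl : e ∈ M.closure ↑(X.erase e) := by
    refine M.closure_subset_closure ?_ (hC.mem_closure_sdiff_singleton_of_mem heC)
    rw [Finset.coe_erase]
    exact sdiff_subset_sdiff_left ((hCY W hW).trans (Finset.coe_subset.2 (hY W hW).2.subset))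
  have hbelow : ∑ Z ∈ cyclicFlats M with ∃ W ∈ Y, Z ⊆ W, dgamma M e Z = -1 :=
    sum_dgamma_of_forall_isFlat hC heC ⟨W, hW⟩ fun V hV => ⟨(hY V hV).1.2, hCY V hV⟩
  have hsplit := Finset.sum_filter_add_sum_filter_not {Z ∈ cyclicFlats M | Z ⊂ X}
    (fun Z => ∃ W ∈ Y, Z ⊆ W) (dgamma M e)
  have hbelowX : {Z ∈ {Z ∈ cyclicFlats M | Z ⊂ X} | ∃ W ∈ Y, Z ⊆ W} =
      {Z ∈ cyclicFlats M | ∃ W ∈ Y, Z ⊆ W} := by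
    rw [Finset.filter_filter]
    exact Finset.filter_congr fun Z _ =>
      ⟨And.right, fun ⟨W, hW, hZW⟩ => ⟨hZW.trans_ssubset (hY W hW).2, W, hW, hZW⟩⟩
  have hrest : {Z ∈ {Z ∈ cyclicFlats M | Z ⊂ X} | ¬ ∃ W ∈ Y, Z ⊆ W} =
      Finset.univ.filter (fun Z : Finset α => CyclicFlat M ↑Z ∧ Z ⊂ X ∧ ∀ W ∈ Y, ¬ Z ⊆ W) := by
    ext Z
    simp [mem_cyclicFlats, and_assoc]
  rw [hbelowX, hrest, hbelow] at hsplit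
  linarith [dgamma_add_sum_dgamma hcyc.1 heX hcl]

theorem statement_13 (M : Matroid α) (e : α) (he : e ∈ M.E)
    (X : Finset α) (hcyc : Cyclic M ↑X) (heX : e ∈ X)
    (Y : Finset (Finset α)) (hYne : Y.Nonempty)
    (hY : ∀ Z ∈ Y, CyclicFlat M ↑Z ∧ Z ⊂ X)
    (hmeet : ∃ C : Set α, Circuit M C ∧ (∀ Z ∈ Y, C ⊆ ↑Z) ∧ e ∈ C) :
    -dgamma M e X =
      ∑ Z ∈ Finset.univ.filter
          (fun Z : Finset α => CyclicFlat M ↑Z ∧ Z ⊂ X ∧ ∀ W ∈ Y, ¬ Z ⊆ W),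
        dgamma M e Z :=
  statement_13_general M e X hcyc heX Y hYne hY hmeet

end Paper
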